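/- arXiv:1108.3970 — 2 statements merged into one kernel-verified Lean document; each statement's English description precedes it below -/
import Mathlib

section
/- Let J = q·m with q, m positive, let c₀, c₁ ∈ L be the two offsets defining one perfect access pattern, and fix a fold index k < q. For every m₀ ∈ ZMod m, the number of pairs (i, b) with i ∈ Fin m and b ∈ {0, 1} such that π((k·m + i : ZMod J) + c_b) = m₀ is exactly 2: exactly one scheduled edge of the fold on port 0 and exactly one on port 1 end at each physical memory unit. Hence during each machine cycle of the folded schedule every dual-port physical memory unit experiences exactly two accesses, one per port, with no read/write conflicts. -/
/-- The fold map `π : ZMod J → ZMod m`, the natural ring reduction (well defined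
since `m` divides `J = q * m`). -/
def foldMap (J q m : ℕ) (hJ : J = q * m) : ZMod J →+* ZMod m :=
  ZMod.castHom (show m ∣ J by rw [hJ]; exact dvd_mul_left m q) (ZMod m)

/-!
Reducing modulo `m` kills the fold offset `k * m`, so the node `k * m + i` of fold `k` reaches
the memory unit `i + π c` through the offset `c`. As `i` runs over `Fin m`, the residues `i`
run over `ZMod m` exactly once, hence so do the `i + π c₀` and the `i + π c₁`.
-/

open Function

theorem ZMod.bijective_natCast_fin (n : ℕ) [NeZero n] :
    Bijective fun i : Fin n => ((i : ℕ) : ZMod n) := by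
  refine ⟨fun i j hij => Fin.ext ?_, fun a => ⟨⟨a.val, a.val_lt⟩, ZMod.natCast_zmod_val a⟩⟩
  simpa [ZMod.val_natCast_of_lt i.isLt, ZMod.val_natCast_of_lt j.isLt] using
    congrArg ZMod.val hij

theorem Nat.card_subtype_prod_bool_of_existsUnique {α : Type*} (P : α → Bool → Prop)
    (h : ∀ b, ∃! a, P a b) : Nat.card {p : α × Bool // P p.1 p.2} = 2 := by
  have hport : Bijective fun p : {p : α × Bool // P p.1 p.2} => p.1.2 := by
    refine ⟨?_, fun b => ?_⟩
    · rintro ⟨⟨a, b⟩, hab⟩ ⟨⟨a', b'⟩, hab'⟩ (hb : b = b')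
      subst hb
      exact Subtype.ext (Prod.ext ((h b).unique hab hab') rfl)
    · obtain ⟨a, ha, -⟩ := h b
      exact ⟨⟨(a, b), ha⟩, rfl⟩
  simp [Nat.card_congr (Equiv.ofBijective _ hport)]

theorem foldMap_natCast_fold_add (J q m : ℕ) (hJ : J = q * m) (k i : ℕ) (c : ZMod J) :
    foldMap J q m hJ (((k * m + i : ℕ) : ZMod J) + c) = (i : ZMod m) + foldMap J q m hJ c := by
  simp

theorem existsUnique_fold_index (J q m : ℕ) [NeZero m] (hJ : J = q * m) (k : ℕ) (c : ZMod J)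
    (m₀ : ZMod m) :
    ∃! i : Fin m, foldMap J q m hJ (((k * m + (i : ℕ) : ℕ) : ZMod J) + c) = m₀ := by
  simp only [foldMap_natCast_fold_add]
  exact ((Equiv.addRight (foldMap J q m hJ c)).bijective.comp
    (ZMod.bijective_natCast_fin m)).existsUnique m₀

theorem folded_dual_port_conflict_free_general (J q m : ℕ) (hm : 0 < m)
    (hJ : J = q * m) (c₀ c₁ : ZMod J) (k : ℕ) (m₀ : ZMod m) :
    Nat.card {p : Fin m × Bool //
        foldMap J q m hJ
          (((k * m + (p.1 : ℕ) : ℕ) : ZMod J) + (if p.2 then c₁ else c₀)) = m₀} = 2 ∧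
    (∃! i : Fin m,
      foldMap J q m hJ (((k * m + (i : ℕ) : ℕ) : ZMod J) + c₀) = m₀) ∧
    (∃! i : Fin m,
      foldMap J q m hJ (((k * m + (i : ℕ) : ℕ) : ZMod J) + c₁) = m₀) := by
  have : NeZero m := ⟨hm.ne'⟩
  have hport (b : Bool) := existsUnique_fold_index J q m hJ k (if b then c₁ else c₀) m₀
  exact ⟨Nat.card_subtype_prod_bool_of_existsUnique _ hport, hport false, hport true⟩

/-- During each machine cycle of the folded schedule (one perfect access pattern,
given by the pair of offsets `(c₀, c₁) ∈ L × L`, restricted to fold `k`), every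
dual-port physical memory unit `m₀` experiences exactly two accesses, one per
port: the number of pairs `(i, b)` with `π((k·m + i) + c_b) = m₀` is exactly `2`,
with exactly one scheduled edge of the fold on port 0 and exactly one on port 1
ending at each physical memory unit. -/
theorem folded_dual_port_conflict_free (J q m : ℕ) (hq : 0 < q) (hm : 0 < m)
    (hJ : J = q * m) (L : Finset (ZMod J)) (c₀ c₁ : ZMod J)
    (hc₀ : c₀ ∈ L) (hc₁ : c₁ ∈ L) (k : ℕ) (hk : k < q) (m₀ : ZMod m) :
    Nat.card {p : Fin m × Bool //
        foldMap J q m hJ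
          (((k * m + (p.1 : ℕ) : ℕ) : ZMod J) + (if p.2 then c₁ else c₀)) = m₀} = 2 ∧
    (∃! i : Fin m,
      foldMap J q m hJ (((k * m + (i : ℕ) : ℕ) : ZMod J) + c₀) = m₀) ∧
    (∃! i : Fin m,
      foldMap J q m hJ (((k * m + (i : ℕ) : ℕ) : ZMod J) + c₁) = m₀) :=
  folded_dual_port_conflict_free_general J q m hm hJ c₀ c₁ k m₀
end

section
/- Let K be a finite field with s elements, V = Fin (d+1) → K, and 0 ≤ l < m ≤ d. For every K-subspace U of V with finrank U = l+1 (an l-dimensional projective subspace of P(d, K)), the number of K-subspaces W of V with finrank W = m+1 and U ≤ W equals φ(d−l−1, m−l−1, s); equivalently, that count multiplied by ∏_{i=0}^{m−l−1} (s^{i+1} − 1) equals ∏_{i=0}^{m−l−1} (s^{d−l−i} − 1). -/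
/-!
Subspaces of `V` containing `U` correspond, via `W ↦ W ⧸ U`, to subspaces of `V ⧸ U` whose
dimension is smaller by `dim U`, so it suffices to count `k`-dimensional subspaces of an
`n`-dimensional space over a field with `q` elements. There are `∏_{i<k} (q^n - q^i)` linearly
independent `k`-tuples, and each `k`-dimensional subspace is spanned by exactly
`∏_{i<k} (q^k - q^i)` of them; cancelling the factors `q^i` leaves the Gaussian binomial.
-/

open Module Submodule Finset

theorem prod_range_pow_sub_pow {q n k : ℕ} (hk : k ≤ n) :
    ∏ i ∈ range k, (q ^ n - q ^ i) =
      (∏ i ∈ range k, q ^ i) * ∏ i ∈ range k, (q ^ (n - i) - 1) := by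
  rw [← prod_mul_distrib]
  refine prod_congr rfl fun i hi => ?_
  rw [Nat.mul_sub, mul_one, ← pow_add, Nat.add_sub_cancel' ((mem_range.mp hi).le.trans hk)]

theorem prod_range_pow_sub_one_reflect {q k : ℕ} :
    ∏ i ∈ range k, (q ^ (k - i) - 1) = ∏ i ∈ range k, (q ^ (i + 1) - 1) := by
  rw [← prod_range_reflect (fun i => q ^ (i + 1) - 1) k]
  refine prod_congr rfl fun i hi => ?_
  have := mem_range.mp hi
  congr 2
  omega

theorem Nat.card_eq_card_mul_of_card_fiber_eq {α β : Type*} [Finite α] [Finite β]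
    (f : α → β) {n : ℕ} (h : ∀ b, Nat.card {a // f a = b} = n) :
    Nat.card α = Nat.card β * n := by
  have := Fintype.ofFinite β
  rw [← Nat.card_congr (Equiv.sigmaFiberEquiv f), Nat.card_sigma]
  simp [h, Nat.card_eq_fintype_card]

section Quotient

variable {K V : Type*} [DivisionRing K] [AddCommGroup V] [Module K V] [FiniteDimensional K V]

theorem Submodule.finrank_comap_mkQ (U : Submodule K V) (W' : Submodule K (V ⧸ U)) :
    finrank K (W'.comap U.mkQ) = finrank K W' + finrank K U := by
  set W := W'.comap U.mkQ
  have hrange : LinearMap.range (U.mkQ ∘ₗ W.subtype) = W' := by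
    rw [LinearMap.range_comp, range_subtype, map_comap_eq_self (by simp)]
  have hker : LinearMap.ker (U.mkQ ∘ₗ W.subtype) = U.comap W.subtype := by
    rw [LinearMap.ker_comp, ker_mkQ]
  have := LinearMap.finrank_range_add_finrank_ker (U.mkQ ∘ₗ W.subtype)
  rw [hrange, hker, (comapSubtypeEquivOfLe (le_comap_mkQ U W')).finrank_eq] at this
  exact this.symm

theorem Submodule.card_finrank_eq_add_of_le_eq_card_quotient (U : Submodule K V) (k : ℕ) :
    Nat.card {W : Submodule K V // finrank K W = finrank K U + k ∧ U ≤ W} =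
      Nat.card {W' : Submodule K (V ⧸ U) // finrank K W' = k} := by
  refine Nat.card_congr (((comapMkQRelIso U).toEquiv.subtypeEquiv fun W' => ?_).trans
    (Equiv.subtypeSubtypeEquivSubtype And.right)).symm
  change _ ↔ finrank K (W'.comap U.mkQ) = _ ∧ U ≤ W'.comap U.mkQ
  rw [finrank_comap_mkQ]
  exact ⟨fun h => ⟨by omega, le_comap_mkQ U W'⟩, fun h => by omega⟩

end Quotient

section Count

variable {K Q : Type*} [DivisionRing K] [Fintype K] [AddCommGroup Q] [Module K Q] [Finite Q]
  {k : ℕ}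

def spanOfLinearIndependent (s : {s : Fin k → Q // LinearIndependent K s}) :
    {W : Submodule K Q // finrank K W = k} :=
  ⟨span K (Set.range s.1), by rw [finrank_span_eq_card s.2, Fintype.card_fin]⟩

noncomputable def fiberSpanOfLinearIndependentEquiv
    (W : {W : Submodule K Q // finrank K W = k}) :
    {s // spanOfLinearIndependent s = W} ≃ {t : Fin k → W.1 // LinearIndependent K t} where
  toFun s :=
    ⟨fun i => ⟨s.1.1 i, congrArg Subtype.val s.2 ▸ subset_span (Set.mem_range_self i)⟩,
      .of_comp W.1.subtype s.1.2⟩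
  invFun t := ⟨⟨W.1.subtype ∘ t.1, t.2.map' W.1.subtype W.1.ker_subtype⟩, by
    have htop : span K (Set.range t.1) = ⊤ :=
      t.2.span_eq_top_of_card_eq_finrank' (by rw [Fintype.card_fin, W.2])
    apply Subtype.ext
    change span K (Set.range (W.1.subtype ∘ t.1)) = W.1
    rw [Set.range_comp, ← map_span, htop, Submodule.map_top, range_subtype]⟩
  left_inv _ := rfl
  right_inv _ := rfl

theorem card_finrank_eq_mul_prod (hk : k ≤ finrank K Q) :
    Nat.card {W : Submodule K Q // finrank K W = k} *
        ∏ i : Fin k, (Fintype.card K ^ k - Fintype.card K ^ i.val) =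
      ∏ i : Fin k, (Fintype.card K ^ finrank K Q - Fintype.card K ^ i.val) := by
  rw [← card_linearIndependent hk,
    Nat.card_eq_card_mul_of_card_fiber_eq (spanOfLinearIndependent (K := K) (Q := Q))]
  intro W
  rw [Nat.card_congr (fiberSpanOfLinearIndependentEquiv W), card_linearIndependent W.2.ge, W.2]

theorem card_finrank_eq_mul_prod_pow_succ_sub_one (hk : k ≤ finrank K Q) :
    Nat.card {W : Submodule K Q // finrank K W = k} *
        ∏ i ∈ range k, (Fintype.card K ^ (i + 1) - 1) =
      ∏ i ∈ range k, (Fintype.card K ^ (finrank K Q - i) - 1) := by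
  have h := card_finrank_eq_mul_prod hk
  rw [Fin.prod_univ_eq_prod_range (fun i => _ ^ k - _ ^ i),
    Fin.prod_univ_eq_prod_range (fun i => _ ^ finrank K Q - _ ^ i),
    prod_range_pow_sub_pow le_rfl, prod_range_pow_sub_pow hk, prod_range_pow_sub_one_reflect] at h
  have hpos : 0 < ∏ i ∈ range k, Fintype.card K ^ i :=
    prod_pos fun i _ => pow_pos Fintype.card_pos i
  exact Nat.eq_of_mul_eq_mul_left hpos (by rw [← h]; ring)

end Count

/-- For every `l`-dimensional projective subspace `U` of `P(d, K)` (a `K`-subspace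
of `V = Fin (d+1) → K` of finrank `l+1`), the number of `m`-dimensional projective
subspaces `W` containing `U` (finrank `m+1`, `U ≤ W`) equals
`φ(d−l−1, m−l−1, s)`; equivalently, that count multiplied by
`∏_{i=0}^{m−l−1} (s^(i+1) − 1)` equals `∏_{i=0}^{m−l−1} (s^(d−l−i) − 1)`.
Here `s = |K|`. -/
theorem card_subspaces_containing (K : Type*) [Field K] [Fintype K]
    (s d l m : ℕ) (hs : Fintype.card K = s) (hlm : l < m) (hmd : m ≤ d)
    (U : Submodule K (Fin (d + 1) → K)) (hU : Module.finrank K U = l + 1) :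
    Nat.card {W : Submodule K (Fin (d + 1) → K) //
          Module.finrank K W = m + 1 ∧ U ≤ W} *
        ∏ i ∈ Finset.range (m - l), (s ^ (i + 1) - 1) =
      ∏ i ∈ Finset.range (m - l), (s ^ (d - l - i) - 1) ∧
    Nat.card {W : Submodule K (Fin (d + 1) → K) //
        Module.finrank K W = m + 1 ∧ U ≤ W} =
      (∏ i ∈ Finset.range (m - l), (s ^ (d - l - i) - 1)) /
        ∏ i ∈ Finset.range (m - l), (s ^ (i + 1) - 1) := by
  subst hs
  have hQ : finrank K ((Fin (d + 1) → K) ⧸ U) = d - l := by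
    rw [finrank_quotient, hU, finrank_fin_fun]
    omega
  have hcard : Nat.card {W : Submodule K (Fin (d + 1) → K) // finrank K W = m + 1 ∧ U ≤ W} =
      Nat.card {W' : Submodule K ((Fin (d + 1) → K) ⧸ U) // finrank K W' = m - l} := by
    rw [← card_finrank_eq_add_of_le_eq_card_quotient, hU, show l + 1 + (m - l) = m + 1 by omega]
  have hcount := card_finrank_eq_mul_prod_pow_succ_sub_one (K := K) (k := m - l)
    (hQ ▸ Nat.sub_le_sub_right hmd l)
  rw [hQ] at hcount
  rw [hcard]
  refine ⟨hcount, (Nat.div_eq_of_eq_mul_left (prod_pos fun i _ => ?_) hcount.symm).symm⟩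
  exact Nat.sub_pos_of_lt (Nat.one_lt_pow i.succ_ne_zero Fintype.one_lt_card)
end
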